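/- arXiv:1804.11304 — 7 statements merged into one kernel-verified Lean document; each statement's English description precedes it below -/
import Mathlib

section
/- Let R be a unital non-associative ring, σ a unital ring endomorphism of R, and δ a σ-derivation of R. Define additive maps π_i^m : R → R for integers i and natural numbers m by π_0^0 = id_R, π_i^m = 0 whenever i < 0 or i > m, and the recursion π_l^{m+1} = π_{l-1}^m ∘ σ + π_l^m ∘ δ. Then the maps also satisfy the reversed recursion π_l^{m+1} = σ ∘ π_{l-1}^m + δ ∘ π_l^m for all integers l and natural numbers m. -/
/-- A non-unital hom-associative ring structure on an additive abelian group `R`: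
a biadditive multiplication `mul` and an additive twisting map `α` satisfying
`α a * (b * c) = (a * b) * α c`. -/
structure IsHomRing {R : Type*} [AddCommGroup R] (mul : R → R → R) (α : R → R) : Prop where
  add_mul : ∀ a b c : R, mul (a + b) c = mul a c + mul b c
  mul_add : ∀ a b c : R, mul a (b + c) = mul a b + mul a c
  alpha_add : ∀ a b : R, α (a + b) = α a + α b
  hom_assoc : ∀ a b c : R, mul (α a) (mul b c) = mul (mul a b) (α c)

/-- A right `R`-hom-module structure on an additive abelian group `M`:
a biadditive scalar multiplication `smul : M → R → M` and an additive map `αM`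
satisfying `αM m • (r * s) = (m • r) • αR s`. -/
structure IsHomModule {R M : Type*} [AddCommGroup R] [AddCommGroup M]
    (mul : R → R → R) (αR : R → R) (smul : M → R → M) (αM : M → M) : Prop where
  add_smul : ∀ (m n : M) (r : R), smul (m + n) r = smul m r + smul n r
  smul_add : ∀ (m : M) (r s : R), smul m (r + s) = smul m r + smul m s
  alpha_add : ∀ m n : M, αM (m + n) = αM m + αM n
  hom_assoc : ∀ (m : M) (r s : R), smul (αM m) (mul r s) = smul (smul m r) (αR s)

/-- A hom-submodule: an additive subgroup (as a set) closed under the scalar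
multiplication and invariant under the twisting map. -/
structure IsHomSubmodule {R M : Type*} [AddCommGroup M]
    (smul : M → R → M) (αM : M → M) (N : Set M) : Prop where
  zero_mem : (0 : M) ∈ N
  add_mem : ∀ a b : M, a ∈ N → b ∈ N → a + b ∈ N
  neg_mem : ∀ a : M, a ∈ N → -a ∈ N
  smul_mem : ∀ a : M, a ∈ N → ∀ r : R, smul a r ∈ N
  alpha_mem : ∀ a : M, a ∈ N → αM a ∈ N

/-- A morphism of right `R`-hom-modules: an additive map commuting with the
twisting maps and preserving scalar multiplication. -/
def IsHomModuleHom {R M M' : Type*} [AddCommGroup M] [AddCommGroup M']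
    (smul : M → R → M) (αM : M → M) (smul' : M' → R → M') (αM' : M' → M')
    (f : M → M') : Prop :=
  (∀ a b : M, f (a + b) = f a + f b) ∧ (∀ m : M, f (αM m) = αM' (f m)) ∧
    ∀ (m : M) (r : R), f (smul m r) = smul' (f m) r

/-- A right hom-module is hom-noetherian if it has no infinite strictly
ascending chain of hom-submodules. -/
def HomNoetherian {R M : Type*} [AddCommGroup M] (smul : M → R → M) (αM : M → M) : Prop :=
  ¬ ∃ c : ℕ → Set M, (∀ n, IsHomSubmodule smul αM (c n)) ∧ ∀ n, c n ⊂ c (n + 1)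

theorem pi_zero_apply_comm {R : Type*} [AddCommGroup R] {π : ℕ → ℤ → R → R}
    (hbase : ∀ a : R, π 0 0 a = a)
    (hzero : ∀ (m : ℕ) (i : ℤ), i < 0 ∨ (m : ℤ) < i → ∀ a : R, π m i a = 0)
    {f : R → R} (hf : f 0 = 0) (i : ℤ) (a : R) : π 0 i (f a) = f (π 0 i a) := by
  rcases eq_or_ne i 0 with rfl | hi
  · rw [hbase, hbase]
  · have hout : i < 0 ∨ ((0 : ℕ) : ℤ) < i := by omega
    rw [hzero 0 i hout, hzero 0 i hout, hf]

theorem pi_reversed_recursion_general {R : Type*} [AddCommGroup R]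
    (σ δ : R → R)
    (hσadd : ∀ a b : R, σ (a + b) = σ a + σ b)
    (hδadd : ∀ a b : R, δ (a + b) = δ a + δ b)
    (π : ℕ → ℤ → R → R)
    (hbase : ∀ a : R, π 0 0 a = a)
    (hzero : ∀ (m : ℕ) (i : ℤ), i < 0 ∨ (m : ℤ) < i → ∀ a : R, π m i a = 0)
    (hrec : ∀ (m : ℕ) (l : ℤ) (a : R), π (m + 1) l a = π m (l - 1) (σ a) + π m l (δ a)) :
    ∀ (m : ℕ) (l : ℤ) (a : R), π (m + 1) l a = σ (π m (l - 1) a) + δ (π m l a) := by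
  have hσ0 : σ 0 = 0 := (AddMonoidHom.mk' σ hσadd).map_zero
  have hδ0 : δ 0 = 0 := (AddMonoidHom.mk' δ hδadd).map_zero
  intro m
  induction m with
  | zero =>
    intro l a
    rw [hrec, pi_zero_apply_comm hbase hzero hσ0, pi_zero_apply_comm hbase hzero hδ0]
  | succ m ih =>
    intro l a
    -- both sides expand to σ π_{l-2} σ + δ π_{l-1} σ + σ π_{l-1} δ + δ π_l δ, in different orders
    rw [hrec, ih, ih, hrec, hrec, hσadd, hδadd]
    abel

/-- the π-functions of an Ore extension of a unital non-associative
ring also satisfy the reversed recursion π_l^{m+1} = σ ∘ π_{l-1}^m + δ ∘ π_l^m. -/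
theorem pi_reversed_recursion {R : Type*} [AddCommGroup R] (mul : R → R → R) (one : R)
    (hadd_mul : ∀ a b c : R, mul (a + b) c = mul a c + mul b c)
    (hmul_add : ∀ a b c : R, mul a (b + c) = mul a b + mul a c)
    (hone : ∀ a : R, mul one a = a) (hone' : ∀ a : R, mul a one = a)
    (σ δ : R → R)
    (hσadd : ∀ a b : R, σ (a + b) = σ a + σ b)
    (hσmul : ∀ a b : R, σ (mul a b) = mul (σ a) (σ b))
    (hσone : σ one = one)
    (hδadd : ∀ a b : R, δ (a + b) = δ a + δ b)
    (hδ : ∀ a b : R, δ (mul a b) = mul (σ a) (δ b) + mul (δ a) b)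
    (π : ℕ → ℤ → R → R)
    (hπadd : ∀ (m : ℕ) (i : ℤ) (a b : R), π m i (a + b) = π m i a + π m i b)
    (hbase : ∀ a : R, π 0 0 a = a)
    (hzero : ∀ (m : ℕ) (i : ℤ), i < 0 ∨ (m : ℤ) < i → ∀ a : R, π m i a = 0)
    (hrec : ∀ (m : ℕ) (l : ℤ) (a : R), π (m + 1) l a = π m (l - 1) (σ a) + π m l (δ a)) :
    ∀ (m : ℕ) (l : ℤ) (a : R), π (m + 1) l a = σ (π m (l - 1) a) + δ (π m l a) :=
  pi_reversed_recursion_general σ δ hσadd hδadd π hbase hzero hrec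
end

section
/- Let R be a unital non-associative ring, σ a unital ring endomorphism of R, and δ a σ-derivation of R. Define additive maps π_i^m : R → R for integers i and natural numbers m by π_0^0 = id_R, π_i^m = 0 whenever i < 0 or i > m, and π_l^{m+1} = π_{l-1}^m ∘ σ + π_l^m ∘ δ. Then for all a, b ∈ R and all natural numbers l, m, n, one has Σ_{i∈ℕ} π_i^m(a · π_{l-i}^n(b)) = Σ_{i∈ℕ} π_i^m(a) · π_l^{i+n}(b), where both sums have only finitely many nonzero terms. -/
/-! Induction on `m`. Unfolding the recursion for `π_i^{m+1}` and using that `σ` is multiplicative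
and `δ` a `σ`-derivation, each side of the identity for `(m + 1, a, n)` splits into the sides of
the identities for `(m, σ a, n + 1)` and `(m, δ a, n)`. On the left this needs the recursion in
the commuted form `π_l^{n+1} = σ ∘ π_{l-1}^n + δ ∘ π_l^n`, itself proved by induction on `n`. -/

open Finset Function

/-- `π m i` stands for the paper's `π_i^m`. -/
structure IsPiFamily {R : Type*} [AddCommMonoid R] (σ δ : R →+ R) (π : ℕ → ℤ → R →+ R) :
    Prop where
  zero_zero : ∀ a, π 0 0 a = a
  eq_zero_of_neg : ∀ m i, i < 0 → π m i = 0
  eq_zero_of_lt : ∀ (m : ℕ) i, (m : ℤ) < i → π m i = 0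
  succ_apply : ∀ m l a, π (m + 1) l a = π m (l - 1) (σ a) + π m l (δ a)

namespace IsPiFamily

variable {R M : Type*} [AddCommMonoid R] [AddCommMonoid M] {σ δ : R →+ R}
  {π : ℕ → ℤ → R →+ R}

theorem zero_apply_map (hπ : IsPiFamily σ δ π) (f : R →+ R) (j : ℤ) (a : R) :
    π 0 j (f a) = f (π 0 j a) := by
  rcases lt_trichotomy j 0 with h | rfl | h
  · simp [hπ.eq_zero_of_neg 0 j h]
  · simp [hπ.zero_zero]
  · simp [hπ.eq_zero_of_lt 0 j (by exact_mod_cast h)]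

theorem succ_apply' (hπ : IsPiFamily σ δ π) (m : ℕ) :
    ∀ l a, π (m + 1) l a = σ (π m (l - 1) a) + δ (π m l a) := by
  induction m with
  | zero =>
    intro l a
    rw [hπ.succ_apply, hπ.zero_apply_map, hπ.zero_apply_map]
  | succ m ih =>
    intro l a
    rw [hπ.succ_apply (m + 1), ih (l - 1) (σ a), ih l (δ a), hπ.succ_apply m (l - 1) a,
      hπ.succ_apply m l a, map_add, map_add]
    abel

theorem support_apply_subset (hπ : IsPiFamily σ δ π) (F : ℕ → R →+ M) (x : ℕ → R) (m : ℕ) :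
    support (fun i : ℕ => F i (π m i (x i))) ⊆ range (m + 1) := by
  intro i hi
  by_contra h
  simp only [coe_range, Set.mem_Iio, not_lt] at h
  exact hi (by simp [hπ.eq_zero_of_lt m i (by omega)])

theorem finite_support_apply (hπ : IsPiFamily σ δ π) (F : ℕ → R →+ M) (x : ℕ → R) (m : ℕ) :
    (support fun i : ℕ => F i (π m i (x i))).Finite :=
  (range (m + 1)).finite_toSet.subset (hπ.support_apply_subset F x m)

theorem sum_range_succ_apply (hπ : IsPiFamily σ δ π) (F : ℕ → R →+ M) (x : ℕ → R) (m : ℕ) :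
    ∑ i ∈ range (m + 1 + 1), F i (π (m + 1) i (x i)) =
      ∑ i ∈ range (m + 1), F (i + 1) (π m i (σ (x (i + 1)))) +
        ∑ i ∈ range (m + 1), F i (π m i (δ (x i))) := by
  simp only [hπ.succ_apply, map_add, sum_add_distrib]
  congr 1
  · rw [sum_range_succ', Nat.cast_zero, zero_sub, hπ.eq_zero_of_neg m (-1) (by norm_num)]
    simp only [Nat.cast_succ, add_sub_cancel_right, AddMonoidHom.zero_apply, map_zero, add_zero]
  · rw [sum_range_succ, hπ.eq_zero_of_lt m ((m + 1 : ℕ) : ℤ) (by push_cast; omega)]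
    simp only [AddMonoidHom.zero_apply, map_zero, add_zero]

variable {μ : R →+ R →+ R}

theorem sum_range_apply_mul_apply (hπ : IsPiFamily σ δ π)
    (hσ : ∀ a b, σ (μ a b) = μ (σ a) (σ b)) (hδ : ∀ a b, δ (μ a b) = μ (σ a) (δ b) + μ (δ a) b)
    (m : ℕ) : ∀ (n : ℕ) (l : ℤ) (a b : R),
      ∑ i ∈ range (m + 1), π m i (μ a (π n (l - i) b)) =
        ∑ i ∈ range (m + 1), μ (π m i a) (π (i + n) l b) := by
  induction m with
  | zero => simp [hπ.zero_zero]
  | succ m ih =>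
    intro n l a b
    have lhs :=
      hπ.sum_range_succ_apply (fun _ => AddMonoidHom.id R) (fun i => μ a (π n (l - i) b)) m
    have rhs := hπ.sum_range_succ_apply (fun i => μ.flip (π (i + n) l b)) (fun _ => a) m
    simp only [AddMonoidHom.id_apply, AddMonoidHom.flip_apply] at lhs rhs
    calc _ = ∑ i ∈ range (m + 1), π m i (σ (μ a (π n (l - ↑(i + 1)) b))) +
            ∑ i ∈ range (m + 1), π m i (δ (μ a (π n (l - i) b))) := lhs
      _ = ∑ i ∈ range (m + 1), π m i (μ (σ a) (π (n + 1) (l - i) b)) +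
            ∑ i ∈ range (m + 1), π m i (μ (δ a) (π n (l - i) b)) := by
        simp only [hσ, hδ, hπ.succ_apply' n, map_add, sum_add_distrib, Nat.cast_succ,
          sub_add_eq_sub_sub]
        abel
      _ = ∑ i ∈ range (m + 1), μ (π m i (σ a)) (π (i + (n + 1)) l b) +
            ∑ i ∈ range (m + 1), μ (π m i (δ a)) (π (i + n) l b) := by rw [ih, ih]
      _ = _ := by simp only [rhs, Nat.add_right_comm _ 1 n, Nat.add_assoc]

theorem finsum_apply_mul_apply (hπ : IsPiFamily σ δ π)
    (hσ : ∀ a b, σ (μ a b) = μ (σ a) (σ b)) (hδ : ∀ a b, δ (μ a b) = μ (σ a) (δ b) + μ (δ a) b)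
    (l : ℤ) (m n : ℕ) (a b : R) :
    ∑ᶠ i : ℕ, π m i (μ a (π n (l - i) b)) = ∑ᶠ i : ℕ, μ (π m i a) (π (i + n) l b) := by
  rw [finsum_eq_sum_of_support_subset (fun i : ℕ => π m i (μ a (π n (l - i) b)))
      (hπ.support_apply_subset (fun _ => AddMonoidHom.id R) _ m),
    finsum_eq_sum_of_support_subset (fun i : ℕ => μ (π m i a) (π (i + n) l b))
      (hπ.support_apply_subset (fun i => μ.flip (π (i + n) l b)) _ m)]
  exact hπ.sum_range_apply_mul_apply hσ hδ m n l a b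

end IsPiFamily

theorem pi_sum_identity_general {R : Type*} [AddCommGroup R] (mul : R → R → R)
    (hadd_mul : ∀ a b c : R, mul (a + b) c = mul a c + mul b c)
    (hmul_add : ∀ a b c : R, mul a (b + c) = mul a b + mul a c)
    (σ δ : R → R)
    (hσadd : ∀ a b : R, σ (a + b) = σ a + σ b)
    (hσmul : ∀ a b : R, σ (mul a b) = mul (σ a) (σ b))
    (hδadd : ∀ a b : R, δ (a + b) = δ a + δ b)
    (hδ : ∀ a b : R, δ (mul a b) = mul (σ a) (δ b) + mul (δ a) b)
    (π : ℕ → ℤ → R → R)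
    (hπadd : ∀ (m : ℕ) (i : ℤ) (a b : R), π m i (a + b) = π m i a + π m i b)
    (hbase : ∀ a : R, π 0 0 a = a)
    (hzero : ∀ (m : ℕ) (i : ℤ), i < 0 ∨ (m : ℤ) < i → ∀ a : R, π m i a = 0)
    (hrec : ∀ (m : ℕ) (l : ℤ) (a : R), π (m + 1) l a = π m (l - 1) (σ a) + π m l (δ a)) :
    ∀ (l m n : ℕ) (a b : R),
      {i : ℕ | π m (i : ℤ) (mul a (π n ((l : ℤ) - (i : ℤ)) b)) ≠ 0}.Finite ∧
      {i : ℕ | mul (π m (i : ℤ) a) (π (i + n) (l : ℤ) b) ≠ 0}.Finite ∧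
      (∑ᶠ i : ℕ, π m (i : ℤ) (mul a (π n ((l : ℤ) - (i : ℤ)) b))) =
        ∑ᶠ i : ℕ, mul (π m (i : ℤ) a) (π (i + n) (l : ℤ) b) := by
  intro l m n a b
  let μ : R →+ R →+ R :=
    AddMonoidHom.mk' (fun a => AddMonoidHom.mk' (mul a) (hmul_add a)) fun a b =>
      AddMonoidHom.ext (hadd_mul a b)
  let π' : ℕ → ℤ → R →+ R := fun m i => AddMonoidHom.mk' (π m i) (hπadd m i)
  have hπ' : IsPiFamily (AddMonoidHom.mk' σ hσadd) (AddMonoidHom.mk' δ hδadd) π' :=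
    { zero_zero := hbase
      eq_zero_of_neg := fun m i h => AddMonoidHom.ext (hzero m i (.inl h))
      eq_zero_of_lt := fun m i h => AddMonoidHom.ext (hzero m i (.inr h))
      succ_apply := hrec }
  exact ⟨hπ'.finite_support_apply (fun _ => AddMonoidHom.id R) _ m,
    hπ'.finite_support_apply (fun i => μ.flip (π' (i + n) l b)) _ m,
    hπ'.finsum_apply_mul_apply (μ := μ) hσmul hδ l m n a b⟩

/-- the π-function summation identity
Σ_{i∈ℕ} π_i^m(a · π_{l-i}^n(b)) = Σ_{i∈ℕ} π_i^m(a) · π_l^{i+n}(b),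
where both sums have only finitely many nonzero terms. -/
theorem pi_sum_identity {R : Type*} [AddCommGroup R] (mul : R → R → R) (one : R)
    (hadd_mul : ∀ a b c : R, mul (a + b) c = mul a c + mul b c)
    (hmul_add : ∀ a b c : R, mul a (b + c) = mul a b + mul a c)
    (hone : ∀ a : R, mul one a = a) (hone' : ∀ a : R, mul a one = a)
    (σ δ : R → R)
    (hσadd : ∀ a b : R, σ (a + b) = σ a + σ b)
    (hσmul : ∀ a b : R, σ (mul a b) = mul (σ a) (σ b))
    (hσone : σ one = one)
    (hδadd : ∀ a b : R, δ (a + b) = δ a + δ b)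
    (hδ : ∀ a b : R, δ (mul a b) = mul (σ a) (δ b) + mul (δ a) b)
    (π : ℕ → ℤ → R → R)
    (hπadd : ∀ (m : ℕ) (i : ℤ) (a b : R), π m i (a + b) = π m i a + π m i b)
    (hbase : ∀ a : R, π 0 0 a = a)
    (hzero : ∀ (m : ℕ) (i : ℤ), i < 0 ∨ (m : ℤ) < i → ∀ a : R, π m i a = 0)
    (hrec : ∀ (m : ℕ) (l : ℤ) (a : R), π (m + 1) l a = π m (l - 1) (σ a) + π m l (δ a)) :
    ∀ (l m n : ℕ) (a b : R),
      {i : ℕ | π m (i : ℤ) (mul a (π n ((l : ℤ) - (i : ℤ)) b)) ≠ 0}.Finite ∧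
      {i : ℕ | mul (π m (i : ℤ) a) (π (i + n) (l : ℤ) b) ≠ 0}.Finite ∧
      (∑ᶠ i : ℕ, π m (i : ℤ) (mul a (π n ((l : ℤ) - (i : ℤ)) b))) =
        ∑ᶠ i : ℕ, mul (π m (i : ℤ) a) (π (i + n) (l : ℤ) b) :=
  pi_sum_identity_general mul hadd_mul hmul_add σ δ hσadd hσmul hδadd hδ π hπadd hbase hzero hrec
end

section
/- First isomorphism theorem for hom-modules: let f : M → M' be a morphism of right R-hom-modules over a non-unital hom-associative ring R. Then ker f is a hom-submodule of M, im f is a hom-submodule of M', and the map g : M/ker f → im f given by g(m + ker f) = f(m) is a well-defined bijective morphism of right R-hom-modules, so M/ker f ≅ im f. -/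
/-! As an additive map, `f` factors through `QuotientAddGroup.kerLift`, which is injective with
range `range f`. Scalar multiplication and the twisting map on the quotient are computed on
representatives, so `kerLift` commutes with them because `f` does. -/

namespace IsHomModule

variable {R M : Type*} [AddCommGroup R] [AddCommGroup M] {mul : R → R → R} {αR : R → R}
  {smul : M → R → M} {αM : M → M}

theorem zero_smul (hM : IsHomModule mul αR smul αM) (r : R) : smul 0 r = 0 := by
  simpa using (hM.add_smul 0 0 r).symm

theorem alpha_zero (hM : IsHomModule mul αR smul αM) : αM 0 = 0 := by
  simpa using (hM.alpha_add 0 0).symm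

end IsHomModule

namespace IsHomModuleHom

variable {R M M' : Type*} [AddCommGroup M] [AddCommGroup M'] {smul : M → R → M} {αM : M → M}
  {smul' : M' → R → M'} {αM' : M' → M'} {f : M → M'}

theorem map_zero (hf : IsHomModuleHom smul αM smul' αM' f) : f 0 = 0 :=
  (AddMonoidHom.mk' f hf.1).map_zero

theorem map_neg (hf : IsHomModuleHom smul αM smul' αM' f) (m : M) : f (-m) = -f m :=
  (AddMonoidHom.mk' f hf.1).map_neg m

theorem isHomSubmodule_ker [AddCommGroup R] {mul : R → R → R} {αR : R → R}
    (hM' : IsHomModule mul αR smul' αM') (hf : IsHomModuleHom smul αM smul' αM' f) :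
    IsHomSubmodule smul αM {m : M | f m = 0} where
  zero_mem := hf.map_zero
  add_mem a b ha hb := by simp_all [hf.1 a b]
  neg_mem a ha := by simp_all [hf.map_neg a]
  smul_mem a ha r := by simp_all [hf.2.2 a r, hM'.zero_smul r]
  alpha_mem a ha := by simp_all [hf.2.1 a, hM'.alpha_zero]

theorem isHomSubmodule_range (hf : IsHomModuleHom smul αM smul' αM' f) :
    IsHomSubmodule smul' αM' (Set.range f) where
  zero_mem := ⟨0, hf.map_zero⟩
  add_mem := by rintro _ _ ⟨a, rfl⟩ ⟨b, rfl⟩; exact ⟨a + b, hf.1 a b⟩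
  neg_mem := by rintro _ ⟨a, rfl⟩; exact ⟨-a, hf.map_neg a⟩
  smul_mem := by rintro _ ⟨a, rfl⟩ r; exact ⟨smul a r, hf.2.2 a r⟩
  alpha_mem := by rintro _ ⟨a, rfl⟩; exact ⟨αM a, hf.2.1 a⟩

theorem isHomModuleHom_kerLift (hf : IsHomModuleHom smul αM smul' αM' f)
    (qsmul : M ⧸ (AddMonoidHom.mk' f hf.1).ker → R → M ⧸ (AddMonoidHom.mk' f hf.1).ker)
    (qα : M ⧸ (AddMonoidHom.mk' f hf.1).ker → M ⧸ (AddMonoidHom.mk' f hf.1).ker)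
    (hqsmul : ∀ (m : M) (r : R),
      qsmul (QuotientAddGroup.mk m) r = QuotientAddGroup.mk (smul m r))
    (hqα : ∀ m : M, qα (QuotientAddGroup.mk m) = QuotientAddGroup.mk (αM m)) :
    IsHomModuleHom qsmul qα smul' αM' (QuotientAddGroup.kerLift (AddMonoidHom.mk' f hf.1)) := by
  refine ⟨map_add _, fun q => ?_, fun q r => ?_⟩ <;>
    obtain ⟨m, rfl⟩ := QuotientAddGroup.mk_surjective q
  · rw [hqα]; exact hf.2.1 m
  · rw [hqsmul]; exact hf.2.2 m r

end IsHomModuleHom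

theorem first_isomorphism_theorem_general {R M M' : Type*} [AddCommGroup R] [AddCommGroup M]
    [AddCommGroup M'] (mul : R → R → R) (αR : R → R)
    (smul : M → R → M) (αM : M → M)
    (smul' : M' → R → M') (αM' : M' → M') (hM' : IsHomModule mul αR smul' αM')
    (f : M → M') (hf : IsHomModuleHom smul αM smul' αM' f)
    (qsmul : M ⧸ (AddMonoidHom.mk' f hf.1).ker → R → M ⧸ (AddMonoidHom.mk' f hf.1).ker)
    (qα : M ⧸ (AddMonoidHom.mk' f hf.1).ker → M ⧸ (AddMonoidHom.mk' f hf.1).ker)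
    (hqsmul : ∀ (m : M) (r : R),
      qsmul (QuotientAddGroup.mk m) r = QuotientAddGroup.mk (smul m r))
    (hqα : ∀ m : M, qα (QuotientAddGroup.mk m) = QuotientAddGroup.mk (αM m)) :
    IsHomSubmodule smul αM {m : M | f m = 0} ∧
    IsHomSubmodule smul' αM' (Set.range f) ∧
    ∃ g : M ⧸ (AddMonoidHom.mk' f hf.1).ker → M',
      (∀ m : M, g (QuotientAddGroup.mk m) = f m) ∧
      Function.Injective g ∧ Set.range g = Set.range f ∧
      IsHomModuleHom qsmul qα smul' αM' g :=
  ⟨hf.isHomSubmodule_ker hM', hf.isHomSubmodule_range,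
    QuotientAddGroup.kerLift (AddMonoidHom.mk' f hf.1), fun _ => rfl,
    QuotientAddGroup.kerLift_injective _,
    (QuotientAddGroup.mk_surjective.range_comp _).symm,
    hf.isHomModuleHom_kerLift qsmul qα hqsmul hqα⟩

/-- the first isomorphism theorem for hom-modules. For a morphism
f : M → M' of right R-hom-modules, ker f is a hom-submodule of M, im f is a
hom-submodule of M', and m + ker f ↦ f(m) is a well-defined bijective morphism
of right R-hom-modules from M/ker f onto im f. -/
theorem first_isomorphism_theorem {R M M' : Type*} [AddCommGroup R] [AddCommGroup M]
    [AddCommGroup M'] (mul : R → R → R) (αR : R → R) (hR : IsHomRing mul αR)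
    (smul : M → R → M) (αM : M → M) (hM : IsHomModule mul αR smul αM)
    (smul' : M' → R → M') (αM' : M' → M') (hM' : IsHomModule mul αR smul' αM')
    (f : M → M') (hf : IsHomModuleHom smul αM smul' αM' f)
    (qsmul : M ⧸ (AddMonoidHom.mk' f hf.1).ker → R → M ⧸ (AddMonoidHom.mk' f hf.1).ker)
    (qα : M ⧸ (AddMonoidHom.mk' f hf.1).ker → M ⧸ (AddMonoidHom.mk' f hf.1).ker)
    (hqsmul : ∀ (m : M) (r : R),
      qsmul (QuotientAddGroup.mk m) r = QuotientAddGroup.mk (smul m r))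
    (hqα : ∀ m : M, qα (QuotientAddGroup.mk m) = QuotientAddGroup.mk (αM m)) :
    IsHomSubmodule smul αM {m : M | f m = 0} ∧
    IsHomSubmodule smul' αM' (Set.range f) ∧
    ∃ g : M ⧸ (AddMonoidHom.mk' f hf.1).ker → M',
      (∀ m : M, g (QuotientAddGroup.mk m) = f m) ∧
      Function.Injective g ∧ Set.range g = Set.range f ∧
      IsHomModuleHom qsmul qα smul' αM' g :=
  first_isomorphism_theorem_general mul αR smul αM smul' αM' hM' f hf qsmul qα hqsmul hqα
end

section
/- Second isomorphism theorem for hom-modules: let M be a right R-hom-module over a non-unital hom-associative ring R, and let N and L be hom-submodules of M. Then N ∩ L is a hom-submodule of N, L is a hom-submodule of N + L, and N/(N ∩ L) ≅ (N + L)/L as right R-hom-modules. -/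
/-! Noether's second isomorphism theorem for abelian groups already gives a bijection
`N/(N ∩ L) ≅ (N + L)/L`, and it is (definitionally) induced by the inclusion `N ⊆ N + L`.
The inclusion commutes with the restricted operations, and the quotient operations are computed
on representatives, so the bijection is a morphism of hom-modules. -/

section

variable {R M : Type*} [AddCommGroup M] {smul : M → R → M} {αM : M → M}

theorem IsHomSubmodule.inter {N L : Set M} (hN : IsHomSubmodule smul αM N)
    (hL : IsHomSubmodule smul αM L) : IsHomSubmodule smul αM (N ∩ L) where
  zero_mem := ⟨hN.zero_mem, hL.zero_mem⟩
  add_mem a b ha hb := ⟨hN.add_mem a b ha.1 hb.1, hL.add_mem a b ha.2 hb.2⟩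
  neg_mem a ha := ⟨hN.neg_mem a ha.1, hL.neg_mem a ha.2⟩
  smul_mem a ha r := ⟨hN.smul_mem a ha.1 r, hL.smul_mem a ha.2 r⟩
  alpha_mem a ha := ⟨hN.alpha_mem a ha.1, hL.alpha_mem a ha.2⟩

theorem isHomModuleHom_inclusion {N K : AddSubgroup M} (hNK : N ≤ K)
    {sN : N → R → N} {aN : N → N} {sK : K → R → K} {aK : K → K}
    (hsN : ∀ (x : N) (r : R), (sN x r : M) = smul (x : M) r)
    (haN : ∀ x : N, (aN x : M) = αM (x : M))
    (hsK : ∀ (x : K) (r : R), (sK x r : M) = smul (x : M) r)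
    (haK : ∀ x : K, (aK x : M) = αM (x : M)) :
    IsHomModuleHom sN aN sK aK (AddSubgroup.inclusion hNK) :=
  ⟨map_add _, fun x => Subtype.ext <| by simp [haN, haK],
    fun x r => Subtype.ext <| by simp [hsN, hsK]⟩

end

theorem IsHomModuleHom.quotientMap {R A B : Type*} [AddCommGroup A] [AddCommGroup B]
    {S : AddSubgroup A} {T : AddSubgroup B}
    {sA : A → R → A} {aA : A → A} {sB : B → R → B} {aB : B → B}
    {qsA : A ⧸ S → R → A ⧸ S} {qaA : A ⧸ S → A ⧸ S}
    {qsB : B ⧸ T → R → B ⧸ T} {qaB : B ⧸ T → B ⧸ T}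
    (hqsA : ∀ (x : A) (r : R), qsA (QuotientAddGroup.mk x) r = QuotientAddGroup.mk (sA x r))
    (hqaA : ∀ x : A, qaA (QuotientAddGroup.mk x) = QuotientAddGroup.mk (aA x))
    (hqsB : ∀ (x : B) (r : R), qsB (QuotientAddGroup.mk x) r = QuotientAddGroup.mk (sB x r))
    (hqaB : ∀ x : B, qaB (QuotientAddGroup.mk x) = QuotientAddGroup.mk (aB x))
    {f : A → B} (hf : IsHomModuleHom sA aA sB aB f) {g : A ⧸ S → B ⧸ T}
    (hg : ∀ x : A, g (QuotientAddGroup.mk x) = QuotientAddGroup.mk (f x)) :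
    IsHomModuleHom qsA qaA qsB qaB g := by
  obtain ⟨hf_add, hf_alpha, hf_smul⟩ := hf
  refine ⟨fun a b => ?_, fun a => ?_, fun a r => ?_⟩
  · induction a using QuotientAddGroup.induction_on
    induction b using QuotientAddGroup.induction_on
    rw [← QuotientAddGroup.mk_add, hg, hg, hg, hf_add, QuotientAddGroup.mk_add]
  · induction a using QuotientAddGroup.induction_on
    rw [hqaA, hg, hg, hf_alpha, hqaB]
  · induction a using QuotientAddGroup.induction_on
    rw [hqsA, hg, hg, hf_smul, hqsB]

theorem second_isomorphism_theorem_general {R M : Type*} [AddCommGroup M]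
    (smul : M → R → M) (αM : M → M)
    (N L : AddSubgroup M)
    (hN : IsHomSubmodule smul αM (N : Set M)) (hL : IsHomSubmodule smul αM (L : Set M))
    (K : AddSubgroup M)
    (hK : (K : Set M) = {x : M | ∃ n ∈ N, ∃ l ∈ L, x = n + l})
    -- the induced hom-module operations on the subtypes N and K
    (sN : N → R → N) (aN : N → N)
    (hsN : ∀ (x : N) (r : R), (sN x r : M) = smul (x : M) r)
    (haN : ∀ x : N, (aN x : M) = αM (x : M))
    (sK : K → R → K) (aK : K → K)
    (hsK : ∀ (x : K) (r : R), (sK x r : M) = smul (x : M) r)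
    (haK : ∀ x : K, (aK x : M) = αM (x : M))
    -- the induced hom-module operations on the quotients N/(N ∩ L) and (N + L)/L
    (q1smul : N ⧸ L.addSubgroupOf N → R → N ⧸ L.addSubgroupOf N)
    (q1α : N ⧸ L.addSubgroupOf N → N ⧸ L.addSubgroupOf N)
    (hq1smul : ∀ (x : N) (r : R),
      q1smul (QuotientAddGroup.mk x) r = QuotientAddGroup.mk (sN x r))
    (hq1α : ∀ x : N, q1α (QuotientAddGroup.mk x) = QuotientAddGroup.mk (aN x))
    (q2smul : K ⧸ L.addSubgroupOf K → R → K ⧸ L.addSubgroupOf K)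
    (q2α : K ⧸ L.addSubgroupOf K → K ⧸ L.addSubgroupOf K)
    (hq2smul : ∀ (x : K) (r : R),
      q2smul (QuotientAddGroup.mk x) r = QuotientAddGroup.mk (sK x r))
    (hq2α : ∀ x : K, q2α (QuotientAddGroup.mk x) = QuotientAddGroup.mk (aK x)) :
    IsHomSubmodule smul αM ((N : Set M) ∩ (L : Set M)) ∧
    (L : Set M) ⊆ (K : Set M) ∧
    ∃ g : N ⧸ L.addSubgroupOf N → K ⧸ L.addSubgroupOf K,
      Function.Bijective g ∧ IsHomModuleHom q1smul q1α q2smul q2α g := by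
  obtain rfl : K = N ⊔ L := SetLike.coe_injective <| by
    ext x
    simp only [hK, SetLike.mem_coe, AddSubgroup.mem_sup, eq_comm, Set.mem_ofPred_eq]
  exact ⟨hN.inter hL, le_sup_right (a := N),
    QuotientAddGroup.quotientInfEquivSumNormalQuotient N L, AddEquiv.bijective _,
    IsHomModuleHom.quotientMap hq1smul hq1α hq2smul hq2α
      (isHomModuleHom_inclusion le_sup_left hsN haN hsK haK) fun _ => rfl⟩

/-- the second isomorphism theorem for hom-modules:
N ∩ L is a hom-submodule of N, L is a hom-submodule of N + L, and
N/(N ∩ L) ≅ (N + L)/L as right R-hom-modules. Here K is the additive subgroup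
whose underlying set is N + L, and the subtype and quotient hom-module
operations are the induced ones. -/
theorem second_isomorphism_theorem {R M : Type*} [AddCommGroup R] [AddCommGroup M]
    (mul : R → R → R) (αR : R → R) (hR : IsHomRing mul αR)
    (smul : M → R → M) (αM : M → M) (hM : IsHomModule mul αR smul αM)
    (N L : AddSubgroup M)
    (hN : IsHomSubmodule smul αM (N : Set M)) (hL : IsHomSubmodule smul αM (L : Set M))
    (K : AddSubgroup M)
    (hK : (K : Set M) = {x : M | ∃ n ∈ N, ∃ l ∈ L, x = n + l})
    -- the induced hom-module operations on the subtypes N and K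
    (sN : N → R → N) (aN : N → N)
    (hsN : ∀ (x : N) (r : R), (sN x r : M) = smul (x : M) r)
    (haN : ∀ x : N, (aN x : M) = αM (x : M))
    (sK : K → R → K) (aK : K → K)
    (hsK : ∀ (x : K) (r : R), (sK x r : M) = smul (x : M) r)
    (haK : ∀ x : K, (aK x : M) = αM (x : M))
    -- the induced hom-module operations on the quotients N/(N ∩ L) and (N + L)/L
    (q1smul : N ⧸ L.addSubgroupOf N → R → N ⧸ L.addSubgroupOf N)
    (q1α : N ⧸ L.addSubgroupOf N → N ⧸ L.addSubgroupOf N)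
    (hq1smul : ∀ (x : N) (r : R),
      q1smul (QuotientAddGroup.mk x) r = QuotientAddGroup.mk (sN x r))
    (hq1α : ∀ x : N, q1α (QuotientAddGroup.mk x) = QuotientAddGroup.mk (aN x))
    (q2smul : K ⧸ L.addSubgroupOf K → R → K ⧸ L.addSubgroupOf K)
    (q2α : K ⧸ L.addSubgroupOf K → K ⧸ L.addSubgroupOf K)
    (hq2smul : ∀ (x : K) (r : R),
      q2smul (QuotientAddGroup.mk x) r = QuotientAddGroup.mk (sK x r))
    (hq2α : ∀ x : K, q2α (QuotientAddGroup.mk x) = QuotientAddGroup.mk (aK x)) :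
    IsHomSubmodule smul αM ((N : Set M) ∩ (L : Set M)) ∧
    (L : Set M) ⊆ (K : Set M) ∧
    ∃ g : N ⧸ L.addSubgroupOf N → K ⧸ L.addSubgroupOf K,
      Function.Bijective g ∧ IsHomModuleHom q1smul q1α q2smul q2α g :=
  second_isomorphism_theorem_general smul αM N L hN hL K hK sN aN hsN haN sK aK hsK haK q1smul q1α
    hq1smul hq1α q2smul q2α hq2smul hq2α
end

section
/- Third isomorphism theorem for hom-modules: let M be a right R-hom-module over a non-unital hom-associative ring R, and let L ⊆ N be hom-submodules of M. Then N/L is a hom-submodule of M/L, and (M/L)/(N/L) ≅ M/N as right R-hom-modules. -/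
theorem IsHomSubmodule.map {R M M' : Type*} [AddCommGroup M] [AddCommGroup M']
    {smul : M → R → M} {αM : M → M} {smul' : M' → R → M'} {αM' : M' → M'}
    {N : AddSubgroup M} (hN : IsHomSubmodule smul αM (N : Set M))
    (f : M →+ M') (hf_smul : ∀ (m : M) (r : R), smul' (f m) r = f (smul m r))
    (hf_alpha : ∀ m : M, αM' (f m) = f (αM m)) :
    IsHomSubmodule smul' αM' ((N.map f : AddSubgroup M') : Set M') where
  zero_mem := (N.map f).zero_mem
  add_mem _ _ := (N.map f).add_mem
  neg_mem _ := (N.map f).neg_mem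
  smul_mem := by
    rintro _ ⟨n, hn, rfl⟩ r
    exact ⟨smul n r, hN.smul_mem n hn r, (hf_smul n r).symm⟩
  alpha_mem := by
    rintro _ ⟨n, hn, rfl⟩
    exact ⟨αM n, hN.alpha_mem n hn, (hf_alpha n).symm⟩

theorem isHomModuleHom_of_comp_surjective {R M Q Q' F : Type*} [AddCommGroup Q] [AddCommGroup Q']
    [FunLike F Q Q'] [AddHomClass F Q Q'] {smul : M → R → M} {αM : M → M}
    {smulQ : Q → R → Q} {αQ : Q → Q} {smulQ' : Q' → R → Q'} {αQ' : Q' → Q'}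
    (π : M → Q) (hπ : Function.Surjective π) (π' : M → Q') (g : F)
    (hg : ∀ m : M, g (π m) = π' m)
    (hπ_smul : ∀ (m : M) (r : R), smulQ (π m) r = π (smul m r))
    (hπ_alpha : ∀ m : M, αQ (π m) = π (αM m))
    (hπ'_smul : ∀ (m : M) (r : R), smulQ' (π' m) r = π' (smul m r))
    (hπ'_alpha : ∀ m : M, αQ' (π' m) = π' (αM m)) :
    IsHomModuleHom smulQ αQ smulQ' αQ' g := by
  refine ⟨map_add g, fun x => ?_, fun x r => ?_⟩
  · obtain ⟨m, rfl⟩ := hπ x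
    rw [hπ_alpha, hg, hg, hπ'_alpha]
  · obtain ⟨m, rfl⟩ := hπ x
    rw [hπ_smul, hg, hg, hπ'_smul]

theorem third_isomorphism_theorem_general {R M : Type*} [AddCommGroup R] [AddCommGroup M]
    (smul : M → R → M) (αM : M → M)
    (L N : AddSubgroup M) (hLN : L ≤ N)
    (hN : IsHomSubmodule smul αM (N : Set M))
    -- the induced hom-module operations on M/L
    (qLsmul : M ⧸ L → R → M ⧸ L) (qLα : M ⧸ L → M ⧸ L)
    (hqLsmul : ∀ (m : M) (r : R),
      qLsmul (QuotientAddGroup.mk m) r = QuotientAddGroup.mk (smul m r))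
    (hqLα : ∀ m : M, qLα (QuotientAddGroup.mk m) = QuotientAddGroup.mk (αM m))
    -- the induced hom-module operations on M/N
    (qNsmul : M ⧸ N → R → M ⧸ N) (qNα : M ⧸ N → M ⧸ N)
    (hqNsmul : ∀ (m : M) (r : R),
      qNsmul (QuotientAddGroup.mk m) r = QuotientAddGroup.mk (smul m r))
    (hqNα : ∀ m : M, qNα (QuotientAddGroup.mk m) = QuotientAddGroup.mk (αM m))
    -- the induced hom-module operations on (M/L)/(N/L), where N/L is the image of N in M/L
    (q3smul : (M ⧸ L) ⧸ N.map (QuotientAddGroup.mk' L) → R →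
      (M ⧸ L) ⧸ N.map (QuotientAddGroup.mk' L))
    (q3α : (M ⧸ L) ⧸ N.map (QuotientAddGroup.mk' L) →
      (M ⧸ L) ⧸ N.map (QuotientAddGroup.mk' L))
    (hq3smul : ∀ (x : M ⧸ L) (r : R),
      q3smul (QuotientAddGroup.mk x) r = QuotientAddGroup.mk (qLsmul x r))
    (hq3α : ∀ x : M ⧸ L, q3α (QuotientAddGroup.mk x) = QuotientAddGroup.mk (qLα x)) :
    IsHomSubmodule qLsmul qLα ((N.map (QuotientAddGroup.mk' L) : AddSubgroup (M ⧸ L)) : Set (M ⧸ L)) ∧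
    ∃ g : (M ⧸ L) ⧸ N.map (QuotientAddGroup.mk' L) → M ⧸ N,
      Function.Bijective g ∧
      (∀ m : M, g (QuotientAddGroup.mk (QuotientAddGroup.mk m)) = QuotientAddGroup.mk m) ∧
      IsHomModuleHom q3smul q3α qNsmul qNα g := by
  refine ⟨hN.map (QuotientAddGroup.mk' L) hqLsmul hqLα, ?_⟩
  let e := QuotientAddGroup.quotientQuotientEquivQuotient L N hLN
  have he : ∀ m : M, e (QuotientAddGroup.mk (QuotientAddGroup.mk m)) = QuotientAddGroup.mk m :=
    fun _ => rfl
  refine ⟨e, e.bijective, he, ?_⟩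
  exact isHomModuleHom_of_comp_surjective (fun m => QuotientAddGroup.mk (QuotientAddGroup.mk m))
    (QuotientAddGroup.mk_surjective.comp QuotientAddGroup.mk_surjective) QuotientAddGroup.mk e he
    (fun m r => by rw [hq3smul, hqLsmul]) (fun m => by rw [hq3α, hqLα]) hqNsmul hqNα

/-- the third isomorphism theorem for hom-modules: for hom-submodules
L ⊆ N of M, N/L is a hom-submodule of M/L and (M/L)/(N/L) ≅ M/N as right
R-hom-modules. The quotient hom-module operations are the induced ones. -/
theorem third_isomorphism_theorem {R M : Type*} [AddCommGroup R] [AddCommGroup M]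
    (mul : R → R → R) (αR : R → R) (hR : IsHomRing mul αR)
    (smul : M → R → M) (αM : M → M) (hM : IsHomModule mul αR smul αM)
    (L N : AddSubgroup M) (hLN : L ≤ N)
    (hL : IsHomSubmodule smul αM (L : Set M)) (hN : IsHomSubmodule smul αM (N : Set M))
    -- the induced hom-module operations on M/L
    (qLsmul : M ⧸ L → R → M ⧸ L) (qLα : M ⧸ L → M ⧸ L)
    (hqLsmul : ∀ (m : M) (r : R),
      qLsmul (QuotientAddGroup.mk m) r = QuotientAddGroup.mk (smul m r))
    (hqLα : ∀ m : M, qLα (QuotientAddGroup.mk m) = QuotientAddGroup.mk (αM m))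
    -- the induced hom-module operations on M/N
    (qNsmul : M ⧸ N → R → M ⧸ N) (qNα : M ⧸ N → M ⧸ N)
    (hqNsmul : ∀ (m : M) (r : R),
      qNsmul (QuotientAddGroup.mk m) r = QuotientAddGroup.mk (smul m r))
    (hqNα : ∀ m : M, qNα (QuotientAddGroup.mk m) = QuotientAddGroup.mk (αM m))
    -- the induced hom-module operations on (M/L)/(N/L), where N/L is the image of N in M/L
    (q3smul : (M ⧸ L) ⧸ N.map (QuotientAddGroup.mk' L) → R →
      (M ⧸ L) ⧸ N.map (QuotientAddGroup.mk' L))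
    (q3α : (M ⧸ L) ⧸ N.map (QuotientAddGroup.mk' L) →
      (M ⧸ L) ⧸ N.map (QuotientAddGroup.mk' L))
    (hq3smul : ∀ (x : M ⧸ L) (r : R),
      q3smul (QuotientAddGroup.mk x) r = QuotientAddGroup.mk (qLsmul x r))
    (hq3α : ∀ x : M ⧸ L, q3α (QuotientAddGroup.mk x) = QuotientAddGroup.mk (qLα x)) :
    IsHomSubmodule qLsmul qLα ((N.map (QuotientAddGroup.mk' L) : AddSubgroup (M ⧸ L)) : Set (M ⧸ L)) ∧
    ∃ g : (M ⧸ L) ⧸ N.map (QuotientAddGroup.mk' L) → M ⧸ N,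
      Function.Bijective g ∧
      (∀ m : M, g (QuotientAddGroup.mk (QuotientAddGroup.mk m)) = QuotientAddGroup.mk m) ∧
      IsHomModuleHom q3smul q3α qNsmul qNα g :=
  third_isomorphism_theorem_general smul αM L N hLN hN qLsmul qLα hqLsmul hqLα qNsmul qNα hqNsmul
    hqNα q3smul q3α hq3smul hq3α
end

section
/- Let M be a right R-hom-module over a non-unital hom-associative ring R, and let N be a hom-submodule of M; equip M/N with the induced right R-hom-module structure. Then M is hom-noetherian if and only if both N and M/N are hom-noetherian. -/
open Classical in
private lemma monotone_chain_stationary {R M : Type*} [AddCommGroup M]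
    (smul : M → R → M) (αM : M → M) (hNoe : HomNoetherian smul αM)
    (d : ℕ → Set M) (hsub : ∀ n, IsHomSubmodule smul αM (d n))
    (hmono : ∀ n, d n ⊆ d (n + 1)) :
    ∃ n, ∀ m, n ≤ m → d m = d n := by
  by_contra h
  push_neg at h
  have hmono' : ∀ a b : ℕ, a ≤ b → d a ⊆ d b := by
    intro a b hab
    induction hab with
    | refl => exact subset_rfl
    | step _ ih => exact ih.trans (hmono _)
  have h' : ∀ n, ∃ m, d n ⊂ d m := by
    intro n
    obtain ⟨m, hm, hne⟩ := h n
    exact ⟨m, ssubset_of_subset_of_ne (hmono' n m hm) (Ne.symm hne)⟩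
  choose f hf using h'
  let g : ℕ → ℕ := fun k => Nat.rec 0 (fun _ p => f p) k
  exact hNoe ⟨fun k => d (g k), fun k => hsub _, fun k => hf (g k)⟩

private lemma sandwich {M : Type*} [AddCommGroup M] (N : AddSubgroup M)
    (A B : Set M)
    (hA : ∀ a b : M, a ∈ A → b ∈ A → a + b ∈ A)
    (hBneg : ∀ a : M, a ∈ B → -a ∈ B)
    (hBadd : ∀ a b : M, a ∈ B → b ∈ B → a + b ∈ B)
    (hAB : A ⊆ B)
    (hcap : ∀ x : M, x ∈ N → (x ∈ A ↔ x ∈ B))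
    (hq : QuotientAddGroup.mk '' A = QuotientAddGroup.mk (s := N) '' B) :
    A = B := by
  apply Set.Subset.antisymm hAB
  intro b hb
  have : (QuotientAddGroup.mk b : M ⧸ N) ∈ QuotientAddGroup.mk '' A := by
    rw [hq]; exact ⟨b, hb, rfl⟩
  obtain ⟨a, ha, hab⟩ := this
  have hx : -a + b ∈ N := (QuotientAddGroup.eq).mp hab
  have hxB : -a + b ∈ B := hBadd _ _ (hBneg _ (hAB ha)) hb
  have hxA : -a + b ∈ A := (hcap _ hx).mpr hxB
  have := hA _ _ ha hxA
  simpa using this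

/-- for a hom-submodule N of a right R-hom-module M, M is
hom-noetherian if and only if both N (with the restricted operations) and M/N
(with the induced operations) are hom-noetherian. -/
theorem homNoetherian_iff_quotient_and_submodule {R M : Type*} [AddCommGroup R]
    [AddCommGroup M]
    (mul : R → R → R) (αR : R → R) (hR : IsHomRing mul αR)
    (smul : M → R → M) (αM : M → M) (hM : IsHomModule mul αR smul αM)
    (N : AddSubgroup M) (hN : IsHomSubmodule smul αM (N : Set M))
    -- the restricted hom-module operations on the subtype N
    (sN : N → R → N) (aN : N → N)
    (hsN : ∀ (x : N) (r : R), (sN x r : M) = smul (x : M) r)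
    (haN : ∀ x : N, (aN x : M) = αM (x : M))
    -- the induced hom-module operations on the quotient M/N
    (qsmul : M ⧸ N → R → M ⧸ N) (qα : M ⧸ N → M ⧸ N)
    (hqsmul : ∀ (m : M) (r : R),
      qsmul (QuotientAddGroup.mk m) r = QuotientAddGroup.mk (smul m r))
    (hqα : ∀ m : M, qα (QuotientAddGroup.mk m) = QuotientAddGroup.mk (αM m)) :
    HomNoetherian smul αM ↔ (HomNoetherian sN aN ∧ HomNoetherian qsmul qα) := by
  constructor
  · intro hMnoe
    constructor
    · rintro ⟨c, hc, hchain⟩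
      apply hMnoe
      refine ⟨fun n => (fun x : N => (x : M)) '' c n, fun n => ?_, fun n => ?_⟩
      · constructor
        · exact ⟨0, (hc n).zero_mem, rfl⟩
        · rintro _ _ ⟨a, ha, rfl⟩ ⟨b, hb, rfl⟩
          exact ⟨a + b, (hc n).add_mem a b ha hb, rfl⟩
        · rintro _ ⟨a, ha, rfl⟩
          exact ⟨-a, (hc n).neg_mem a ha, rfl⟩
        · rintro _ ⟨a, ha, rfl⟩ r
          exact ⟨sN a r, (hc n).smul_mem a ha r, hsN a r⟩
        · rintro _ ⟨a, ha, rfl⟩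
          exact ⟨aN a, (hc n).alpha_mem a ha, haN a⟩
      · obtain ⟨hsub, hne⟩ := hchain n
        constructor
        · exact Set.image_mono hsub
        · intro hle
          apply hne
          intro x hx
          obtain ⟨y, hy, hxy⟩ := hle ⟨x, hx, rfl⟩
          rwa [show y = x from Subtype.ext hxy] at hy
    · rintro ⟨c, hc, hchain⟩
      apply hMnoe
      refine ⟨fun n => QuotientAddGroup.mk ⁻¹' c n, fun n => ?_, fun n => ?_⟩
      · constructor
        · show QuotientAddGroup.mk (0 : M) ∈ c n
          rw [QuotientAddGroup.mk_zero]; exact (hc n).zero_mem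
        · intro a b ha hb
          show QuotientAddGroup.mk (a + b) ∈ c n
          rw [QuotientAddGroup.mk_add]
          exact (hc n).add_mem _ _ ha hb
        · intro a ha
          show QuotientAddGroup.mk (-a) ∈ c n
          rw [QuotientAddGroup.mk_neg]
          exact (hc n).neg_mem _ ha
        · intro a ha r
          show QuotientAddGroup.mk (smul a r) ∈ c n
          rw [← hqsmul]
          exact (hc n).smul_mem _ ha r
        · intro a ha
          show QuotientAddGroup.mk (αM a) ∈ c n
          rw [← hqα]
          exact (hc n).alpha_mem _ ha
      · obtain ⟨hsub, hne⟩ := hchain n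
        constructor
        · exact Set.preimage_mono hsub
        · intro hle
          apply hne
          intro q hq
          obtain ⟨m, rfl⟩ := QuotientAddGroup.mk_surjective q
          exact hle hq
  · rintro ⟨hNnoe, hQnoe⟩ ⟨c, hc, hchain⟩
    have hmono : ∀ n, c n ⊆ c (n + 1) := fun n => (hchain n).1
    set dN : ℕ → Set N := fun n => (fun x : N => (x : M)) ⁻¹' c n with hdN
    set dQ : ℕ → Set (M ⧸ N) := fun n => QuotientAddGroup.mk '' c n with hdQ
    have hdNsub : ∀ n, IsHomSubmodule sN aN (dN n) := by
      intro n
      constructor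
      · show ((0 : N) : M) ∈ c n
        simpa using (hc n).zero_mem
      · intro a b ha hb
        show ((a + b : N) : M) ∈ c n
        push_cast
        exact (hc n).add_mem _ _ ha hb
      · intro a ha
        show ((-a : N) : M) ∈ c n
        push_cast
        exact (hc n).neg_mem _ ha
      · intro a ha r
        show ((sN a r : N) : M) ∈ c n
        rw [hsN]
        exact (hc n).smul_mem _ ha r
      · intro a ha
        show ((aN a : N) : M) ∈ c n
        rw [haN]
        exact (hc n).alpha_mem _ ha
    have hdQsub : ∀ n, IsHomSubmodule qsmul qα (dQ n) := by
      intro n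
      constructor
      · exact ⟨0, (hc n).zero_mem, QuotientAddGroup.mk_zero N⟩
      · rintro _ _ ⟨a, ha, rfl⟩ ⟨b, hb, rfl⟩
        exact ⟨a + b, (hc n).add_mem a b ha hb, QuotientAddGroup.mk_add N a b⟩
      · rintro _ ⟨a, ha, rfl⟩
        exact ⟨-a, (hc n).neg_mem a ha, QuotientAddGroup.mk_neg N a⟩
      · rintro _ ⟨a, ha, rfl⟩ r
        exact ⟨smul a r, (hc n).smul_mem a ha r, (hqsmul a r).symm⟩
      · rintro _ ⟨a, ha, rfl⟩
        exact ⟨αM a, (hc n).alpha_mem a ha, (hqα a).symm⟩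
    obtain ⟨n₁, hn₁⟩ := monotone_chain_stationary sN aN hNnoe dN hdNsub
      (fun n => Set.preimage_mono (hmono n))
    obtain ⟨n₂, hn₂⟩ := monotone_chain_stationary qsmul qα hQnoe dQ hdQsub
      (fun n => Set.image_mono (hmono n))
    set n₀ := max n₁ n₂ with hn₀
    have hdNeq : dN n₀ = dN (n₀ + 1) := by
      rw [hn₁ _ (le_max_left _ _), hn₁ _ ((le_max_left n₁ n₂).trans (Nat.le_succ _))]
    have hdQeq : dQ n₀ = dQ (n₀ + 1) := by
      rw [hn₂ _ (le_max_right _ _), hn₂ _ ((le_max_right n₁ n₂).trans (Nat.le_succ _))]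
    have hstat : c n₀ = c (n₀ + 1) := by
      apply sandwich N (c n₀) (c (n₀ + 1)) (hc n₀).add_mem (hc (n₀+1)).neg_mem
        (hc (n₀+1)).add_mem (hmono n₀) ?_ hdQeq
      intro x hx
      have := Set.ext_iff.mp hdNeq ⟨x, hx⟩
      exact this
    exact (hchain n₀).2 (hstat ▸ subset_rfl)
end

section
/- Let R be a unital hom-associative ring with twisting map α (so R has a multiplicative identity 1). Then for every b ∈ R one has α(b) = b·α(1), and consequently every right ideal I of R (an additive subgroup with I·R ⊆ I) satisfies α(I) ⊆ I, i.e. every right ideal of R is a right hom-ideal. -/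
namespace IsHomRing

variable {R : Type*} [AddCommGroup R] {mul : R → R → R} {α : R → R}

/-- Hom-associativity applied to `(b, 1, 1)`. -/
theorem alpha_eq_mul_alpha_one (hR : IsHomRing mul α) {one : R}
    (hone' : ∀ a : R, mul a one = a) (b : R) : α b = mul b (α one) := by
  have h := hR.hom_assoc b one one
  rwa [hone' one, hone' (α b), hone' b] at h

theorem alpha_mem_of_mul_mem (hR : IsHomRing mul α) {one : R}
    (hone' : ∀ a : R, mul a one = a) {I : Set R} (hI : ∀ a ∈ I, ∀ r : R, mul a r ∈ I)
    {a : R} (ha : a ∈ I) : α a ∈ I :=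
  hR.alpha_eq_mul_alpha_one hone' a ▸ hI a ha (α one)

end IsHomRing

theorem unital_homRing_right_ideal_invariant_general {R : Type*} [AddCommGroup R]
    (mul : R → R → R) (α : R → R) (hR : IsHomRing mul α)
    (one : R) (hone' : ∀ a : R, mul a one = a) :
    (∀ b : R, α b = mul b (α one)) ∧
    ∀ I : Set R, (0 : R) ∈ I → (∀ a b : R, a ∈ I → b ∈ I → a + b ∈ I) →
      (∀ a : R, a ∈ I → -a ∈ I) → (∀ a ∈ I, ∀ r : R, mul a r ∈ I) →
      ∀ a ∈ I, α a ∈ I :=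
  ⟨hR.alpha_eq_mul_alpha_one hone', fun _ _ _ _ hI _ ha => hR.alpha_mem_of_mul_mem hone' hI ha⟩

/-- in a unital hom-associative ring, α(b) = b·α(1) for every b, and
consequently every right ideal is invariant under α, i.e. is a right hom-ideal. -/
theorem unital_homRing_right_ideal_invariant {R : Type*} [AddCommGroup R]
    (mul : R → R → R) (α : R → R) (hR : IsHomRing mul α)
    (one : R) (hone : ∀ a : R, mul one a = a) (hone' : ∀ a : R, mul a one = a) :
    (∀ b : R, α b = mul b (α one)) ∧
    ∀ I : Set R, (0 : R) ∈ I → (∀ a b : R, a ∈ I → b ∈ I → a + b ∈ I) →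
      (∀ a : R, a ∈ I → -a ∈ I) → (∀ a ∈ I, ∀ r : R, mul a r ∈ I) →
      ∀ a ∈ I, α a ∈ I :=
  unital_homRing_right_ideal_invariant_general mul α hR one hone'
end
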